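/- arXiv:2208.09291 — 2 statements merged into one kernel-verified Lean document; each statement's English description precedes it below -/
import Mathlib

section
/- Let η, λ, α_m, β_m, δ₆ > 0, let c_m > 1, and let s₀, z₀ ≥ 0 with s₀ + z₀ < 1. Then there exists exactly one pair of continuously differentiable functions (s, z) : [0,∞) → ℝ² with s(0) = s₀, z(0) = z₀, s(t) ≥ 0 and z(t) ≥ 0 for all t ≥ 0, satisfying, for all t ≥ 0, s'(t) = −η s(t) + λ z(t) (β_m − (β_m − η) s(t)) / (α_m (c_m − 1 + s(t)) + λ z(t)) and s'(t) + z'(t) = −δ₆ z(t). -/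
open Set NNReal

/-! Auxiliary definitions: clamped vector field. -/

/-- Clamp a real number to `[0,1]`. -/
private noncomputable def cl (x : ℝ) : ℝ := min (max x 0) 1

private lemma cl_nonneg (x : ℝ) : 0 ≤ cl x := le_min (le_max_right x 0) zero_le_one

private lemma cl_le_one (x : ℝ) : cl x ≤ 1 := min_le_right _ _

private lemma cl_eq_self {x : ℝ} (h0 : 0 ≤ x) (h1 : x ≤ 1) : cl x = x := by
  simp [cl, max_eq_left h0, min_eq_left h1]

private lemma cl_eq_zero {x : ℝ} (h : x ≤ 0) : cl x = 0 := by
  simp [cl, max_eq_right h]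

private lemma cl_lipschitz : LipschitzWith 1 cl :=
  ((LipschitzWith.id (α := ℝ)).max_const 0).min_const 1

/-- The clamped scalar right-hand side of the `s` equation. -/
private noncomputable def f0 (η lam αm βm cm a b : ℝ) : ℝ :=
  -η * cl a + lam * cl b * (βm - (βm - η) * cl a) / (αm * (cm - 1 + cl a) + lam * cl b)

/-- The clamped planar vector field. -/
private noncomputable def Fv (η lam αm βm δ6 cm : ℝ) (p : ℝ × ℝ) : ℝ × ℝ :=
  (f0 η lam αm βm cm p.1 p.2, -δ6 * cl p.2 - f0 η lam αm βm cm p.1 p.2)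

/-- The unclamped planar vector field. -/
private noncomputable def Gv (η lam αm βm δ6 cm : ℝ) (p : ℝ × ℝ) : ℝ × ℝ :=
  (-η * p.1 + lam * p.2 * (βm - (βm - η) * p.1) / (αm * (cm - 1 + p.1) + lam * p.2),
   -δ6 * p.2 -
     (-η * p.1 + lam * p.2 * (βm - (βm - η) * p.1) / (αm * (cm - 1 + p.1) + lam * p.2)))

private lemma Fv_eq_comp (η lam αm βm δ6 cm : ℝ) :
    Fv η lam αm βm δ6 cm = Gv η lam αm βm δ6 cm ∘ (fun p : ℝ × ℝ => (cl p.1, cl p.2)) := rfl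

/-- On the unit square the clamped field agrees with the true one: `f0` formula. -/
private lemma f0_eq {η lam αm βm cm a b : ℝ} (h0a : 0 ≤ a) (h1a : a ≤ 1) (h0b : 0 ≤ b)
    (h1b : b ≤ 1) :
    f0 η lam αm βm cm a b =
      -η * a + lam * b * (βm - (βm - η) * a) / (αm * (cm - 1 + a) + lam * b) := by
  simp [f0, cl_eq_self h0a h1a, cl_eq_self h0b h1b]

/-- `f0` is nonnegative when `a ≤ 0`. -/
private lemma f0_nonneg_of_nonpos {η lam αm βm cm : ℝ} (hη : 0 < η) (hlam : 0 < lam)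
    (hαm : 0 < αm) (hβm : 0 < βm) (hcm : 1 < cm) {a : ℝ} (b : ℝ) (ha : a ≤ 0) :
    0 ≤ f0 η lam αm βm cm a b := by
  rw [f0, cl_eq_zero ha]
  have hb := cl_nonneg b
  have hden : 0 < αm * (cm - 1 + 0) + lam * cl b := by nlinarith
  have hnum : 0 ≤ lam * cl b * (βm - (βm - η) * 0) := by
    have := mul_nonneg (mul_nonneg hlam.le hb) hβm.le
    nlinarith
  have := div_nonneg hnum hden.le
  linarith

/-- The `z`-component of the field is nonnegative when `b ≤ 0`. -/
private lemma z_rhs_nonneg_of_nonpos {η lam αm βm δ6 cm : ℝ} (hη : 0 < η) {b : ℝ} (a : ℝ)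
    (hb : b ≤ 0) :
    0 ≤ -δ6 * cl b - f0 η lam αm βm cm a b := by
  rw [f0, cl_eq_zero hb]
  have ha := cl_nonneg a
  have : -δ6 * 0 - (-η * cl a + lam * 0 * (βm - (βm - η) * cl a) /
      (αm * (cm - 1 + cl a) + lam * 0)) = η * cl a := by ring_nf
  rw [this]
  positivity

/-- Barrier lemma: a function with nonnegative derivative whenever it is nonpositive stays
nonnegative. -/
private lemma nonneg_of_barrier {f f' : ℝ → ℝ} (h0 : 0 ≤ f 0)
    (hd : ∀ t ∈ Ici (0 : ℝ), HasDerivWithinAt f (f' t) (Ici 0) t)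
    (hpos : ∀ t ∈ Ici (0 : ℝ), f t ≤ 0 → 0 ≤ f' t) :
    ∀ t ∈ Ici (0 : ℝ), 0 ≤ f t := by
  intro t1 ht1
  by_contra hneg
  push_neg at hneg
  have hcont : ContinuousOn f (Ici 0) := fun u hu => (hd u hu).continuousWithinAt
  have ht1pos : 0 < t1 := by
    rcases eq_or_lt_of_le (mem_Ici.mp ht1) with h | h
    · exfalso; rw [← h] at hneg; linarith
    · exact h
  set S : Set ℝ := Icc 0 t1 ∩ f ⁻¹' Ici 0 with hS
  have hSclosed : IsClosed S :=
    (hcont.mono Icc_subset_Ici_self).preimage_isClosed_of_isClosed isClosed_Icc isClosed_Ici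
  have hSne : S.Nonempty := ⟨0, ⟨le_rfl, ht1pos.le⟩, h0⟩
  have hSbdd : BddAbove S := ⟨t1, fun u hu => hu.1.2⟩
  set c : ℝ := sSup S with hc
  have hcS : c ∈ S := hSclosed.csSup_mem hSne hSbdd
  have hc0 : 0 ≤ c := hcS.1.1
  have hclt : c < t1 := by
    rcases eq_or_lt_of_le hcS.1.2 with h | h
    · exfalso; have : (0 : ℝ) ≤ f c := hcS.2; rw [h] at this; linarith
    · exact h
  have hflt : ∀ u ∈ Ioc c t1, f u < 0 := by
    intro u hu
    by_contra h
    push_neg at h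
    have hu0 : 0 ≤ u := hc0.trans hu.1.le
    have : u ≤ c := le_csSup hSbdd ⟨⟨hu0, hu.2⟩, h⟩
    linarith [hu.1]
  have hsub : Icc c t1 ⊆ Ici (0 : ℝ) := fun u hu => hc0.trans hu.1
  have hmono : MonotoneOn f (Icc c t1) := by
    apply monotoneOn_of_deriv_nonneg (convex_Icc _ _) (hcont.mono hsub)
    · rw [interior_Icc]
      intro x hx
      have hx0 : 0 < x := lt_of_le_of_lt hc0 hx.1
      exact ((hd x (mem_Ici.mpr hx0.le)).hasDerivAt (Ici_mem_nhds hx0)).differentiableAt.differentiableWithinAt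
    · rw [interior_Icc]
      intro x hx
      have hx0 : 0 < x := lt_of_le_of_lt hc0 hx.1
      rw [((hd x (mem_Ici.mpr hx0.le)).hasDerivAt (Ici_mem_nhds hx0)).deriv]
      exact hpos x (mem_Ici.mpr hx0.le) (hflt x ⟨hx.1, hx.2.le⟩).le
  have : f c ≤ f t1 := hmono ⟨le_rfl, hclt.le⟩ ⟨hclt.le, le_rfl⟩ hclt.le
  have : (0 : ℝ) ≤ f c := hcS.2
  linarith

/-- A function with nonpositive derivative on `[0,∞)` is bounded by its initial value. -/
private lemma le_init_of_deriv_nonpos {f f' : ℝ → ℝ}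
    (hd : ∀ t ∈ Ici (0 : ℝ), HasDerivWithinAt f (f' t) (Ici 0) t)
    (hneg : ∀ t ∈ Ici (0 : ℝ), f' t ≤ 0) : ∀ t ∈ Ici (0 : ℝ), f t ≤ f 0 := by
  have hcont : ContinuousOn f (Ici 0) := fun u hu => (hd u hu).continuousWithinAt
  intro t ht
  have hanti : AntitoneOn f (Ici 0) := by
    apply antitoneOn_of_deriv_nonpos (convex_Ici 0) hcont
    · rw [interior_Ici]
      intro x hx
      exact ((hd x (mem_Ici.mpr hx.le)).hasDerivAt (Ici_mem_nhds hx)).differentiableAt.differentiableWithinAt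
    · rw [interior_Ici]
      intro x hx
      rw [((hd x (mem_Ici.mpr hx.le)).hasDerivAt (Ici_mem_nhds hx)).deriv]
      exact hneg x (mem_Ici.mpr hx.le)
  exact hanti self_mem_Ici ht ht


private lemma Gv_contDiffOn {η lam αm βm δ6 cm : ℝ} (hαm : 0 < αm) (hlam : 0 < lam) :
    ContDiffOn ℝ 1 (Gv η lam αm βm δ6 cm)
      {p : ℝ × ℝ | 0 < αm * (cm - 1 + p.1) + lam * p.2} := by
  have hdenne : ∀ p ∈ {p : ℝ × ℝ | 0 < αm * (cm - 1 + p.1) + lam * p.2},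
      αm * (cm - 1 + p.1) + lam * p.2 ≠ 0 := fun p hp => ne_of_gt hp
  have h1 : ContDiffOn ℝ 1
      (fun p : ℝ × ℝ => -η * p.1 + lam * p.2 * (βm - (βm - η) * p.1) /
        (αm * (cm - 1 + p.1) + lam * p.2))
      {p : ℝ × ℝ | 0 < αm * (cm - 1 + p.1) + lam * p.2} := by
    apply ContDiffOn.add
    · exact (contDiff_const.mul contDiff_fst).contDiffOn
    · exact ContDiffOn.div
        (((contDiff_const.mul contDiff_snd).mul
          (contDiff_const.sub (contDiff_const.mul contDiff_fst))).contDiffOn)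
        ((contDiff_const.mul (contDiff_const.add contDiff_fst)).add
          (contDiff_const.mul contDiff_snd)).contDiffOn hdenne
  exact ContDiffOn.prodMk h1
    (ContDiffOn.sub ((contDiff_const.mul contDiff_snd).contDiffOn) h1)

private lemma sq_subset {lam αm cm : ℝ} (hαm : 0 < αm) (hlam : 0 < lam) (hcm : 1 < cm) :
    (Icc (0:ℝ) 1 ×ˢ Icc (0:ℝ) 1) ⊆ {p : ℝ × ℝ | 0 < αm * (cm - 1 + p.1) + lam * p.2} := by
  rintro ⟨a, b⟩ ⟨⟨h1, h2⟩, h3, h4⟩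
  show 0 < αm * (cm - 1 + a) + lam * b
  nlinarith

private lemma clpair_lipschitz : LipschitzWith 1 (fun p : ℝ × ℝ => (cl p.1, cl p.2)) := by
  have h := (cl_lipschitz.comp LipschitzWith.prod_fst).prodMk
    (cl_lipschitz.comp LipschitzWith.prod_snd)
  simpa using h

private lemma clpair_mem (p : ℝ × ℝ) :
    (cl p.1, cl p.2) ∈ (Icc (0:ℝ) 1 ×ˢ Icc (0:ℝ) 1) :=
  ⟨⟨cl_nonneg _, cl_le_one _⟩, ⟨cl_nonneg _, cl_le_one _⟩⟩

private lemma Fv_lipschitz {η lam αm βm δ6 cm : ℝ} (hαm : 0 < αm) (hlam : 0 < lam)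
    (hcm : 1 < cm) : ∃ L : ℝ≥0, LipschitzWith L (Fv η lam αm βm δ6 cm) := by
  set U : Set (ℝ × ℝ) := {p : ℝ × ℝ | 0 < αm * (cm - 1 + p.1) + lam * p.2} with hU
  have hUopen : IsOpen U := by
    apply isOpen_lt continuous_const
    exact (continuous_const.mul (continuous_const.add continuous_fst)).add
      (continuous_const.mul continuous_snd)
  set Q : Set (ℝ × ℝ) := Icc (0:ℝ) 1 ×ˢ Icc (0:ℝ) 1 with hQ
  have hQcpt : IsCompact Q := isCompact_Icc.prod isCompact_Icc
  have hQconv : Convex ℝ Q := (convex_Icc _ _).prod (convex_Icc _ _)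
  have hQU : Q ⊆ U := sq_subset hαm hlam hcm
  have hG := Gv_contDiffOn (η := η) (βm := βm) (δ6 := δ6) hαm hlam (cm := cm)
  have hGdiff : ∀ p ∈ Q, DifferentiableAt ℝ (Gv η lam αm βm δ6 cm) p := fun p hp =>
    ((hG.differentiableOn one_ne_zero).differentiableAt (hUopen.mem_nhds (hQU hp)))
  have hfd : ContinuousOn (fderiv ℝ (Gv η lam αm βm δ6 cm)) U :=
    hG.continuousOn_fderiv_of_isOpen hUopen le_rfl
  obtain ⟨M, hM⟩ := hQcpt.exists_bound_of_continuousOn (hfd.mono hQU)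
  set LG : ℝ≥0 := ⟨max M 0, le_max_right _ _⟩ with hLG
  have hGlip : LipschitzOnWith LG (Gv η lam αm βm δ6 cm) Q := by
    apply Convex.lipschitzOnWith_of_nnnorm_fderiv_le hGdiff _ hQconv
    intro p hp
    rw [← NNReal.coe_le_coe, coe_nnnorm]
    exact (hM p hp).trans (le_max_left _ _)
  refine ⟨LG * 1, ?_⟩
  rw [Fv_eq_comp, ← lipschitzOnWith_univ]
  exact hGlip.comp clpair_lipschitz.lipschitzOnWith (fun p _ => clpair_mem p)

private lemma Fv_bound {η lam αm βm δ6 cm : ℝ} (hαm : 0 < αm) (hlam : 0 < lam)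
    (hcm : 1 < cm) : ∃ C : ℝ, 0 ≤ C ∧ ∀ p, ‖Fv η lam αm βm δ6 cm p‖ ≤ C := by
  have hQcpt : IsCompact (Icc (0:ℝ) 1 ×ˢ Icc (0:ℝ) 1) := isCompact_Icc.prod isCompact_Icc
  have hG := Gv_contDiffOn (η := η) (βm := βm) (δ6 := δ6) hαm hlam (cm := cm)
  obtain ⟨C0, hC0⟩ := hQcpt.exists_bound_of_continuousOn
    (hG.continuousOn.mono (sq_subset hαm hlam hcm))
  refine ⟨max C0 0, le_max_right _ _, fun p => ?_⟩
  rw [Fv_eq_comp]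
  exact (hC0 _ (clpair_mem p)).trans (le_max_left _ _)

/-- `IsSolutionSubcritical η lam αm βm δ6 cm s0 z0 s z` means that `(s, z)` is a
(continuously differentiable) solution on `[0,∞)` of the limiting system of ODEs of the
sub-critical case, with initial condition `(s₀, z₀)`, staying nonnegative:
`s' = −η s + λ z (β_m − (β_m − η) s)/(α_m (c_m − 1 + s) + λ z)` and `s' + z' = −δ₆ z`. -/
def IsSolutionSubcritical (η lam αm βm δ6 cm s0 z0 : ℝ) (s z : ℝ → ℝ) : Prop :=
  s 0 = s0 ∧ z 0 = z0 ∧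
  (∀ t ∈ Set.Ici (0 : ℝ), 0 ≤ s t ∧ 0 ≤ z t) ∧
  (∀ t ∈ Set.Ici (0 : ℝ),
    HasDerivWithinAt s
      (-η * s t + lam * z t * (βm - (βm - η) * s t) /
        (αm * (cm - 1 + s t) + lam * z t)) (Set.Ici 0) t ∧
    HasDerivWithinAt z
      (-δ6 * z t -
        (-η * s t + lam * z t * (βm - (βm - η) * s t) /
          (αm * (cm - 1 + s t) + lam * z t))) (Set.Ici 0) t)

/-- Existence and uniqueness of the solution of the limiting system of ODEs of the
sub-critical case `c_m > 1` (Proposition 3.4 of the paper). -/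
theorem subcritical_ode_exists_unique (η lam αm βm δ6 cm s0 z0 : ℝ)
    (hη : 0 < η) (hlam : 0 < lam) (hαm : 0 < αm) (hβm : 0 < βm) (hδ6 : 0 < δ6)
    (hcm : 1 < cm) (hs0 : 0 ≤ s0) (hz0 : 0 ≤ z0) (hsz : s0 + z0 < 1) :
    (∃ s z : ℝ → ℝ, IsSolutionSubcritical η lam αm βm δ6 cm s0 z0 s z) ∧
    (∀ s₁ z₁ s₂ z₂ : ℝ → ℝ,
      IsSolutionSubcritical η lam αm βm δ6 cm s0 z0 s₁ z₁ →
      IsSolutionSubcritical η lam αm βm δ6 cm s0 z0 s₂ z₂ →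
      ∀ t ∈ Set.Ici (0 : ℝ), s₁ t = s₂ t ∧ z₁ t = z₂ t) := by
  obtain ⟨L, hFlip⟩ := Fv_lipschitz (η := η) (βm := βm) (δ6 := δ6) hαm hlam hcm
  obtain ⟨C, hCnn, hFC⟩ := Fv_bound (η := η) (βm := βm) (δ6 := δ6) hαm hlam hcm
  set F : ℝ × ℝ → ℝ × ℝ := Fv η lam αm βm δ6 cm with hFdef
  set x₀ : ℝ × ℝ := (s0, z0) with hx₀
  -- Existence of solutions on [0, n] for every n
  have hex : ∀ n : ℕ, ∃ f : ℝ → ℝ × ℝ, f 0 = x₀ ∧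
      ∀ t ∈ Icc (0:ℝ) n, HasDerivWithinAt f (F (f t)) (Icc (0:ℝ) n) t := by
    intro n
    have hPL : IsPicardLindelof (fun _ p => F p) (tmin := 0) (tmax := (n : ℝ))
        ⟨0, le_rfl, Nat.cast_nonneg n⟩ x₀ (⟨C, hCnn⟩ * n) 0 ⟨C, hCnn⟩ L :=
      { lipschitzOnWith := fun _ _ => hFlip.lipschitzOnWith
        continuousOn := fun _ _ => continuousOn_const
        norm_le := fun _ _ x _ => hFC x
        mul_max_le := by
          simp only [sub_zero, sub_self, NNReal.coe_zero, NNReal.coe_mul, NNReal.coe_natCast,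
            max_eq_left (Nat.cast_nonneg (α := ℝ) n)]
          exact le_rfl }
    exact hPL.exists_eq_forall_mem_Icc_hasDerivWithinAt₀
  choose fc hfc0 hfcd using hex
  -- upgrade the derivative to be within `Ici 0`
  have hmem_nhds : ∀ (n : ℕ) (t : ℝ), 0 ≤ t → t < n → Icc (0:ℝ) n ∈ nhdsWithin t (Ici 0) := by
    intro n t ht0 htn
    apply Filter.mem_of_superset
      (Filter.inter_mem self_mem_nhdsWithin (nhdsWithin_le_nhds (Iio_mem_nhds htn)))
    rintro x ⟨hx1, hx2⟩
    exact ⟨hx1, le_of_lt hx2⟩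
  have hd' : ∀ (n : ℕ) (t : ℝ), 0 ≤ t → t < n →
      HasDerivWithinAt (fc n) (F (fc n t)) (Ici 0) t := fun n t ht0 htn =>
    (hfcd n t ⟨ht0, htn.le⟩).mono_of_mem_nhdsWithin (hmem_nhds n t ht0 htn)
  -- consistency of the family
  have hcons : ∀ m n : ℕ, m ≤ n → Set.EqOn (fc m) (fc n) (Icc 0 m) := by
    intro m n hmn
    have hmn' : (m : ℝ) ≤ n := Nat.cast_le.mpr hmn
    apply ODE_solution_unique (v := fun _ p => F p) (fun _ => hFlip)
    · exact fun u hu => (hfcd m u hu).continuousWithinAt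
    · exact fun u hu => (hd' m u hu.1 hu.2).mono (Ici_subset_Ici.mpr hu.1)
    · exact fun u hu => ((hfcd n u ⟨hu.1, hu.2.trans hmn'⟩).continuousWithinAt).mono
        (Icc_subset_Icc_right hmn')
    · exact fun u hu => (hd' n u hu.1 (lt_of_lt_of_le hu.2 hmn')).mono
        (Ici_subset_Ici.mpr hu.1)
    · rw [hfc0 m, hfc0 n]
  -- the glued global solution
  set sol : ℝ → ℝ × ℝ := fun t => fc (⌊t⌋₊ + 1) t with hsol_def
  have hsol_eqn : ∀ (n : ℕ) (t : ℝ), 0 ≤ t → t < n → sol t = fc n t := by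
    intro n t ht0 htn
    have hlt : t < ((⌊t⌋₊ + 1 : ℕ) : ℝ) := by exact_mod_cast Nat.lt_floor_add_one t
    rcases le_total (⌊t⌋₊ + 1) n with h | h
    · exact hcons _ n h ⟨ht0, hlt.le⟩
    · exact (hcons n _ h ⟨ht0, htn.le⟩).symm
  have hsol0 : sol 0 = x₀ := hfc0 _
  have hsold : ∀ t ∈ Ici (0:ℝ), HasDerivWithinAt sol (F (sol t)) (Ici 0) t := by
    intro t ht
    have hlt : t < ((⌊t⌋₊ + 1 : ℕ) : ℝ) := by exact_mod_cast Nat.lt_floor_add_one t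
    set n : ℕ := ⌊t⌋₊ + 1 with hn
    have heq : sol =ᶠ[nhdsWithin t (Ici 0)] fc n := by
      have hmem : Ici (0:ℝ) ∩ Iio (n : ℝ) ∈ nhdsWithin t (Ici 0) :=
        Filter.inter_mem self_mem_nhdsWithin (nhdsWithin_le_nhds (Iio_mem_nhds hlt))
      exact Filter.eventuallyEq_of_mem hmem (fun u hu => hsol_eqn n u hu.1 hu.2)
    have h2 := (hd' n t ht hlt).congr_of_eventuallyEq heq (hsol_eqn n t ht hlt)
    rw [hsol_eqn n t ht hlt]
    exact h2
  -- components
  set sf : ℝ → ℝ := fun t => (sol t).1 with hsf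
  set zf : ℝ → ℝ := fun t => (sol t).2 with hzf
  have hsf0 : sf 0 = s0 := by rw [hsf]; simp [hsol0, hx₀]
  have hzf0 : zf 0 = z0 := by rw [hzf]; simp [hsol0, hx₀]
  have hsd : ∀ t ∈ Ici (0:ℝ),
      HasDerivWithinAt sf (f0 η lam αm βm cm (sf t) (zf t)) (Ici 0) t := by
    intro t ht
    have h := (ContinuousLinearMap.fst ℝ ℝ ℝ).hasFDerivAt.comp_hasDerivWithinAt t (hsold t ht)
    exact h
  have hzd : ∀ t ∈ Ici (0:ℝ),
      HasDerivWithinAt zf (-δ6 * cl (zf t) - f0 η lam αm βm cm (sf t) (zf t)) (Ici 0) t := by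
    intro t ht
    have h := (ContinuousLinearMap.snd ℝ ℝ ℝ).hasFDerivAt.comp_hasDerivWithinAt t (hsold t ht)
    exact h
  -- nonnegativity
  have hsnn : ∀ t ∈ Ici (0:ℝ), 0 ≤ sf t := by
    apply nonneg_of_barrier (f' := fun t => f0 η lam αm βm cm (sf t) (zf t))
    · rw [hsf0]; exact hs0
    · exact hsd
    · exact fun t _ hle => f0_nonneg_of_nonpos hη hlam hαm hβm hcm (zf t) hle
  have hznn : ∀ t ∈ Ici (0:ℝ), 0 ≤ zf t := by
    apply nonneg_of_barrier
      (f' := fun t => -δ6 * cl (zf t) - f0 η lam αm βm cm (sf t) (zf t))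
    · rw [hzf0]; exact hz0
    · exact hzd
    · exact fun t _ hle => z_rhs_nonneg_of_nonpos hη (sf t) hle
  -- the sum is nonincreasing
  have hsum : ∀ t ∈ Ici (0:ℝ), sf t + zf t ≤ s0 + z0 := by
    intro t ht
    have hud : ∀ u ∈ Ici (0:ℝ),
        HasDerivWithinAt (fun u => sf u + zf u) (-δ6 * cl (zf u)) (Ici 0) u := by
      intro u hu
      have h := (hsd u hu).add (hzd u hu)
      have heq : f0 η lam αm βm cm (sf u) (zf u) +
          (-δ6 * cl (zf u) - f0 η lam αm βm cm (sf u) (zf u)) = -δ6 * cl (zf u) := by ring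
      rwa [heq] at h
    have := le_init_of_deriv_nonpos hud (fun u _ => by nlinarith [cl_nonneg (zf u)]) t ht
    calc sf t + zf t ≤ sf 0 + zf 0 := this
      _ = s0 + z0 := by rw [hsf0, hzf0]
  have hbnd : ∀ t ∈ Ici (0:ℝ), sf t ≤ 1 ∧ zf t ≤ 1 := by
    intro t ht
    constructor
    · have := hsum t ht; have := hznn t ht; linarith
    · have := hsum t ht; have := hsnn t ht; linarith
  -- existence
  constructor
  · refine ⟨sf, zf, hsf0, hzf0, fun t ht => ⟨hsnn t ht, hznn t ht⟩, fun t ht => ?_⟩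
    obtain ⟨hb1, hb2⟩ := hbnd t ht
    constructor
    · have heq := f0_eq (η := η) (lam := lam) (αm := αm) (βm := βm) (cm := cm)
        (hsnn t ht) hb1 (hznn t ht) hb2
      rw [← heq]
      exact hsd t ht
    · have heq := f0_eq (η := η) (lam := lam) (αm := αm) (βm := βm) (cm := cm)
        (hsnn t ht) hb1 (hznn t ht) hb2
      have h := hzd t ht
      rwa [cl_eq_self (hznn t ht) hb2, heq] at h
  -- uniqueness
  · intro s₁ z₁ s₂ z₂ h₁ h₂
    -- a true solution, viewed as a pair, solves the clamped ODE
    have key : ∀ (s z : ℝ → ℝ), IsSolutionSubcritical η lam αm βm δ6 cm s0 z0 s z →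
        (fun t => (s t, z t)) 0 = x₀ ∧
        ∀ t ∈ Ici (0:ℝ), HasDerivWithinAt (fun t => (s t, z t))
          (F ((fun t => (s t, z t)) t)) (Ici 0) t := by
      intro s z hsol
      obtain ⟨hs0', hz0', hnn, hder⟩ := hsol
      have hub : ∀ t ∈ Ici (0:ℝ), s t ≤ 1 ∧ z t ≤ 1 := by
        have hud : ∀ u ∈ Ici (0:ℝ),
            HasDerivWithinAt (fun u => s u + z u) (-δ6 * z u) (Ici 0) u := by
          intro u hu
          have h := (hder u hu).1.add (hder u hu).2
          have heq : (-η * s u + lam * z u * (βm - (βm - η) * s u) /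
              (αm * (cm - 1 + s u) + lam * z u)) +
              (-δ6 * z u - (-η * s u + lam * z u * (βm - (βm - η) * s u) /
              (αm * (cm - 1 + s u) + lam * z u))) = -δ6 * z u := by ring
          rwa [heq] at h
        have hsum' := le_init_of_deriv_nonpos hud
          (fun u hu => by nlinarith [(hnn u hu).2]) 
        intro t ht
        have h1 := hsum' t ht
        rw [hs0', hz0'] at h1
        exact ⟨by linarith [(hnn t ht).2], by linarith [(hnn t ht).1]⟩
      refine ⟨by simp [hs0', hz0', hx₀], fun t ht => ?_⟩
      have h := (hder t ht).1.prodMk (hder t ht).2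
      have hFeq : F (s t, z t) =
          (-η * s t + lam * z t * (βm - (βm - η) * s t) /
            (αm * (cm - 1 + s t) + lam * z t),
          -δ6 * z t - (-η * s t + lam * z t * (βm - (βm - η) * s t) /
            (αm * (cm - 1 + s t) + lam * z t))) := by
        have heq := f0_eq (η := η) (lam := lam) (αm := αm) (βm := βm) (cm := cm)
          (hnn t ht).1 (hub t ht).1 (hnn t ht).2 (hub t ht).2
        rw [hFdef]
        show (f0 η lam αm βm cm (s t) (z t), -δ6 * cl (z t) - f0 η lam αm βm cm (s t) (z t)) = _
        rw [heq, cl_eq_self (hnn t ht).2 (hub t ht).2]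
      rw [hFeq]
      exact h
    obtain ⟨ha0, had⟩ := key s₁ z₁ h₁
    obtain ⟨hb0, hbd⟩ := key s₂ z₂ h₂
    intro t ht
    have heq : Set.EqOn (fun t => (s₁ t, z₁ t)) (fun t => (s₂ t, z₂ t)) (Icc 0 t) := by
      apply ODE_solution_unique (v := fun _ p => F p) (fun _ => hFlip)
      · exact fun u hu => ((had u hu.1).continuousWithinAt).mono Icc_subset_Ici_self
      · exact fun u hu => (had u hu.1).mono (Ici_subset_Ici.mpr hu.1)
      · exact fun u hu => ((hbd u hu.1).continuousWithinAt).mono Icc_subset_Ici_self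
      · exact fun u hu => (hbd u hu.1).mono (Ici_subset_Ici.mpr hu.1)
      · exact ha0.trans hb0.symm
    have h := heq ⟨ht, le_rfl⟩
    exact ⟨congrArg Prod.fst h, congrArg Prod.snd h⟩
end

section
/- Let η, λ, α_m, β_m, δ₆ > 0, let c_m > 1, and let s₀, z₀ ≥ 0 with s₀ + z₀ < 1. Let (s, z) : [0,∞) → ℝ² be continuously differentiable with s(0) = s₀, z(0) = z₀, s(t) ≥ 0 and z(t) ≥ 0 for all t ≥ 0, satisfying, for all t ≥ 0, s'(t) = −η s(t) + λ z(t) (β_m − (β_m − η) s(t)) / (α_m (c_m − 1 + s(t)) + λ z(t)) and s'(t) + z'(t) = −δ₆ z(t). Then lim_{t→∞} s(t) = 0 and lim_{t→∞} z(t) = 0. -/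
/-- Any solution of the limiting system of ODEs of the sub-critical case `c_m > 1`
converges to `(0, 0)` at infinity. -/
theorem subcritical_ode_tendsto_zero (η lam αm βm δ6 cm s0 z0 : ℝ)
    (hη : 0 < η) (hlam : 0 < lam) (hαm : 0 < αm) (hβm : 0 < βm) (hδ6 : 0 < δ6)
    (hcm : 1 < cm) (hs0 : 0 ≤ s0) (hz0 : 0 ≤ z0) (hsz : s0 + z0 < 1)
    (s z : ℝ → ℝ) (hsol : IsSolutionSubcritical η lam αm βm δ6 cm s0 z0 s z) :
    Filter.Tendsto s Filter.atTop (nhds 0) ∧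
    Filter.Tendsto z Filter.atTop (nhds 0) := by
  obtain ⟨hs0', hz0', hnn, hderiv⟩ := hsol
  have hcm1 : 0 < cm - 1 := by linarith
  set a : ℝ := δ6 * αm * (cm - 1) / (2 * lam * (βm + η)) with ha_def
  have ha : 0 < a := by positivity
  set ε : ℝ := min (a * η / (1 + a)) (δ6 / 2) with hε_def
  have hε : 0 < ε := lt_min (by positivity) (by positivity)
  -- the derivative of s
  set S' : ℝ → ℝ := fun t => -η * s t + lam * z t * (βm - (βm - η) * s t) /
      (αm * (cm - 1 + s t) + lam * z t) with hS'_def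
  have hds : ∀ t ∈ Set.Ici (0:ℝ), HasDerivWithinAt s (S' t) (Set.Ici 0) t :=
    fun t ht => (hderiv t ht).1
  have hdz : ∀ t ∈ Set.Ici (0:ℝ), HasDerivWithinAt z (-δ6 * z t - S' t) (Set.Ici 0) t :=
    fun t ht => (hderiv t ht).2
  -- step 1 : s + z is nonincreasing, hence s t < 1
  have hw : ∀ t ∈ Set.Ici (0:ℝ),
      HasDerivWithinAt (fun t => s t + z t) (-δ6 * z t) (Set.Ici 0) t := by
    intro t ht
    have h := (hds t ht).add (hdz t ht)
    exact h.congr_deriv (by ring)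
  have hwanti : AntitoneOn (fun t => s t + z t) (Set.Ici 0) := by
    apply antitoneOn_of_deriv_nonpos (convex_Ici 0)
    · intro t ht
      exact (hw t ht).continuousWithinAt
    · intro t ht
      rw [interior_Ici] at ht
      exact ((hw t (Set.Ioi_subset_Ici_self ht)).hasDerivAt (Ici_mem_nhds ht)).differentiableAt.differentiableWithinAt
    · intro t ht
      rw [interior_Ici] at ht
      rw [((hw t (Set.Ioi_subset_Ici_self ht)).hasDerivAt (Ici_mem_nhds ht)).deriv]
      have := (hnn t (Set.Ioi_subset_Ici_self ht)).2
      nlinarith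
  have hs1 : ∀ t ∈ Set.Ici (0:ℝ), s t < 1 := by
    intro t ht
    have h1 := hwanti Set.self_mem_Ici ht ht
    simp only [hs0', hz0'] at h1
    have := (hnn t ht).2
    linarith
  -- key differential inequality
  have key : ∀ t ∈ Set.Ici (0:ℝ),
      a * S' t - δ6 * z t + ε * ((1 + a) * s t + z t) ≤ 0 := by
    intro t ht
    obtain ⟨hS, hZ⟩ := hnn t ht
    have hS1 := hs1 t ht
    have hDpos : 0 < αm * (cm - 1) := by positivity
    have hD : αm * (cm - 1) ≤ αm * (cm - 1 + s t) + lam * z t := by nlinarith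
    have hfrac : lam * z t * (βm - (βm - η) * s t) / (αm * (cm - 1 + s t) + lam * z t)
        ≤ lam * z t * (βm + η) / (αm * (cm - 1)) := by
      apply div_le_div₀ (by positivity) ?_ hDpos hD
      have t1 : 0 ≤ lam * z t * η * (1 - s t) :=
        mul_nonneg (mul_nonneg (mul_nonneg hlam.le hZ) hη.le) (by linarith)
      have t2 : 0 ≤ lam * z t * βm * s t :=
        mul_nonneg (mul_nonneg (mul_nonneg hlam.le hZ) hβm.le) hS
      nlinarith [t1, t2]
    have haM : a * (lam * z t * (βm + η) / (αm * (cm - 1))) = δ6 / 2 * z t := by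
      rw [ha_def]
      field_simp
    have haF : a * (lam * z t * (βm - (βm - η) * s t) / (αm * (cm - 1 + s t) + lam * z t))
        ≤ δ6 / 2 * z t := by
      calc a * (lam * z t * (βm - (βm - η) * s t) / (αm * (cm - 1 + s t) + lam * z t))
          ≤ a * (lam * z t * (βm + η) / (αm * (cm - 1))) :=
            mul_le_mul_of_nonneg_left hfrac ha.le
        _ = δ6 / 2 * z t := haM
    have hε1 : ε * (1 + a) ≤ a * η := by
      have h1 : ε ≤ a * η / (1 + a) := min_le_left _ _
      rw [le_div_iff₀ (by positivity)] at h1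
      exact h1
    have hε2 : ε ≤ δ6 / 2 := min_le_right _ _
    have hεS : ε * (1 + a) * s t ≤ a * η * s t := mul_le_mul_of_nonneg_right hε1 hS
    have hεZ : ε * z t ≤ δ6 / 2 * z t := mul_le_mul_of_nonneg_right hε2 hZ
    have hexp : a * S' t = a * (-η * s t)
        + a * (lam * z t * (βm - (βm - η) * s t) / (αm * (cm - 1 + s t) + lam * z t)) := by
      rw [hS'_def]; ring
    rw [hexp]
    linarith [haF, hεS, hεZ]
  -- the Lyapunov function u and its exponential rescaling g
  set u : ℝ → ℝ := fun t => (1 + a) * s t + z t with hu_def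
  have hdu : ∀ t ∈ Set.Ici (0:ℝ),
      HasDerivWithinAt u (a * S' t - δ6 * z t) (Set.Ici 0) t := by
    intro t ht
    have h := ((hds t ht).const_mul (1 + a)).add (hdz t ht)
    exact h.congr_deriv (by ring)
  set g : ℝ → ℝ := fun t => u t * Real.exp (ε * t) with hg_def
  have hdg : ∀ t ∈ Set.Ici (0:ℝ),
      HasDerivWithinAt g ((a * S' t - δ6 * z t) * Real.exp (ε * t)
        + u t * (Real.exp (ε * t) * ε)) (Set.Ici 0) t := by
    intro t ht
    have he : HasDerivAt (fun t : ℝ => Real.exp (ε * t)) (Real.exp (ε * t) * (ε * 1)) t :=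
      ((hasDerivAt_id t).const_mul ε).exp
    have he' : HasDerivAt (fun t : ℝ => Real.exp (ε * t)) (Real.exp (ε * t) * ε) t := by
      simpa using he
    exact (hdu t ht).mul he'.hasDerivWithinAt
  have hganti : AntitoneOn g (Set.Ici 0) := by
    apply antitoneOn_of_deriv_nonpos (convex_Ici 0)
    · intro t ht
      exact (hdg t ht).continuousWithinAt
    · intro t ht
      rw [interior_Ici] at ht
      exact ((hdg t (Set.Ioi_subset_Ici_self ht)).hasDerivAt (Ici_mem_nhds ht)).differentiableAt.differentiableWithinAt
    · intro t ht
      rw [interior_Ici] at ht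
      rw [((hdg t (Set.Ioi_subset_Ici_self ht)).hasDerivAt (Ici_mem_nhds ht)).deriv]
      have hk := key t (Set.Ioi_subset_Ici_self ht)
      have hexp := Real.exp_pos (ε * t)
      have : (a * S' t - δ6 * z t) * Real.exp (ε * t) + u t * (Real.exp (ε * t) * ε)
          = (a * S' t - δ6 * z t + ε * u t) * Real.exp (ε * t) := by ring
      rw [this]
      exact mul_nonpos_of_nonpos_of_nonneg (by rw [hu_def]; exact hk) hexp.le
  -- exponential decay of u
  have hubound : ∀ t ∈ Set.Ici (0:ℝ), u t ≤ u 0 / Real.exp (ε * t) := by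
    intro t ht
    have h1 := hganti Set.self_mem_Ici ht ht
    have h2 : g 0 = u 0 := by simp [hg_def]
    rw [h2] at h1
    rw [le_div_iff₀ (Real.exp_pos _)]
    exact h1
  have hexp_top : Filter.Tendsto (fun t : ℝ => Real.exp (ε * t)) Filter.atTop Filter.atTop :=
    Real.tendsto_exp_atTop.comp (Filter.Tendsto.const_mul_atTop hε Filter.tendsto_id)
  have hbound0 : Filter.Tendsto (fun t => u 0 / Real.exp (ε * t)) Filter.atTop (nhds 0) :=
    Filter.Tendsto.div_atTop tendsto_const_nhds hexp_top
  have hev : ∀ᶠ t in Filter.atTop, t ∈ Set.Ici (0:ℝ) := Filter.eventually_ge_atTop 0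
  constructor
  · refine squeeze_zero' (g := fun t => u 0 / Real.exp (ε * t) / (1 + a)) ?_ ?_
      (by simpa using hbound0.div_const (1 + a))
    · exact hev.mono fun t ht => (hnn t ht).1
    · refine hev.mono fun t ht => ?_
      have h1 := hubound t ht
      have hzt := (hnn t ht).2
      have h3 : (1 + a) * s t ≤ u 0 / Real.exp (ε * t) := by
        refine le_trans ?_ h1
        simp only [hu_def]
        linarith
      rw [le_div_iff₀ (show (0:ℝ) < 1 + a by positivity)]
      linarith
  · refine squeeze_zero' (g := fun t => u 0 / Real.exp (ε * t)) ?_ ?_ hbound0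
    · exact hev.mono fun t ht => (hnn t ht).2
    · refine hev.mono fun t ht => ?_
      have h1 := hubound t ht
      have h2 : 0 ≤ (1 + a) * s t := mul_nonneg (by positivity) (hnn t ht).1
      have h3 : z t ≤ u t := by simp only [hu_def]; linarith
      linarith
end
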